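/- arXiv:1211.0425 — 4 statements merged into one kernel-verified Lean document; each statement's English description precedes it below -/
import Mathlib

section
/- Let u: D → ℝ be a nonnegative function with finite mean oscillation at 0 ∈ D and integrable on the disk B(0, e^{-1}) ⊆ D. Then there exists a constant C such that for all ε ∈ (0, e^{-e}), ∫_{ε < |z| < e^{-1}} u(z) / (|z| log(1/|z|))² dxdy ≤ C · log log(1/ε). -/
/-!
On the dyadic annulus `r / 2 ≤ |z| < r` the weight `(|z| log (1/|z|))⁻²` is at most
`4 / (r log (1/r))²`, so the annulus contributes at most `4π ⨍_{B_r} u / log² (1/r)`.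
Comparing the means over `B_{r/2}` and `B_r` with the mean oscillation over `B_r` gives
`⨍_{B_{r/2}} u ≤ ⨍_{B_r} u + 4M`, so along `r = ρ 2⁻ᵏ` the means grow at most linearly in `k`,
while `log² (1/r) ≥ (k+1)² log² 2`: the `k`-th annulus contributes `O(1/(k+1))`. Reaching the
radius `ε` takes about `log₂ (1/ε)` annuli, and the harmonic sum is `O(log log (1/ε))`.
-/

open MeasureTheory Metric Filter

section SetAverage

variable {α : Type*} [MeasurableSpace α] {μ : Measure α} {s t : Set α} {f : α → ℝ}

theorem setAverage_nonneg_of_nonneg (hs : MeasurableSet s) (hf : ∀ x ∈ s, 0 ≤ f x) :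
    0 ≤ ⨍ x in s, f x ∂μ := by
  rw [setAverage_eq]
  exact smul_nonneg (by positivity) (setIntegral_nonneg hs hf)

theorem setAverage_le_setAverage_add_oscillation (hst : s ⊆ t) (hs : μ s ≠ 0) (ht : μ t ≠ ⊤)
    (hf : IntegrableOn f t μ) :
    ⨍ x in s, f x ∂μ ≤
      (⨍ x in t, f x ∂μ) + μ.real t / μ.real s * ⨍ x in t, |f x - ⨍ y in t, f y ∂μ| ∂μ := by
  set c := ⨍ y in t, f y ∂μ
  have hs_fin : μ s ≠ ⊤ := ne_top_of_le_ne_top ht (measure_mono hst)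
  have hs_pos : 0 < μ.real s := ENNReal.toReal_pos hs hs_fin
  have ht_pos : 0 < μ.real t := hs_pos.trans_le (measureReal_mono hst ht)
  have hosc : IntegrableOn (fun x => |f x - c|) t μ := (hf.sub (integrableOn_const ht)).abs
  have key : ∫ x in s, f x ∂μ ≤ μ.real s * c + ∫ x in t, |f x - c| ∂μ :=
    calc ∫ x in s, f x ∂μ = μ.real s * c + ∫ x in s, (f x - c) ∂μ := by
          rw [integral_sub (hf.mono_set hst) (integrableOn_const hs_fin), setIntegral_const,
            smul_eq_mul]
          ring
      _ ≤ μ.real s * c + ∫ x in s, |f x - c| ∂μ :=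
          add_le_add_right (integral_mono ((hf.mono_set hst).sub (integrableOn_const hs_fin))
            (hosc.mono_set hst) fun x => le_abs_self _) _
      _ ≤ μ.real s * c + ∫ x in t, |f x - c| ∂μ :=
          add_le_add_right (setIntegral_mono_set hosc (ae_of_all _ fun x => abs_nonneg _)
            (LE.le.eventuallyLE hst)) _
  rw [setAverage_eq, setAverage_eq, smul_eq_mul, smul_eq_mul, inv_mul_le_iff₀ hs_pos]
  field_simp
  linarith

end SetAverage

theorem apply_div_two_pow_le_add_mul {g : ℝ → ℝ} {R A : ℝ}
    (hg : ∀ r, 0 < r → r ≤ R → g (r / 2) ≤ g r + A) (hR : 0 < R) (k : ℕ) :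
    g (R / 2 ^ k) ≤ g R + A * k := by
  induction k with
  | zero => simp
  | succ k ih =>
    have hk : 0 < R / 2 ^ k := by positivity
    have hstep := hg _ hk (div_le_self hR.le (one_le_pow₀ one_le_two))
    rw [pow_succ, ← div_div]
    push_cast
    linarith

theorem inv_sq_mul_log_le_of_mem_Ico {a b x : ℝ} (ha : 0 < a) (hb : b < 1)
    (hx : x ∈ Set.Ico a b) :
    ((x * Real.log (1 / x)) ^ 2)⁻¹ ≤ ((a * Real.log (1 / b)) ^ 2)⁻¹ := by
  have hb0 : 0 < b := ha.trans_le (hx.1.trans hx.2.le)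
  have hlogb : 0 < Real.log (1 / b) := Real.log_pos ((one_lt_div hb0).2 hb)
  have hlog : Real.log (1 / b) ≤ Real.log (1 / x) := by
    gcongr
    exacts [ha.trans_le hx.1, hx.2.le]
  gcongr
  exacts [(ha.trans_le hx.1).le, hx.1]

section Annulus

variable {E : Type*} [NormedAddCommGroup E] [MeasurableSpace E] [BorelSpace E] {μ : Measure E}
  {u : E → ℝ} {a b ε : ℝ}

theorem integrableOn_annulus_div_sq_log (ha : 0 < a) (hb : b < 1)
    (hu : ∀ z ∈ ball (0 : E) b, 0 ≤ u z) (hint : IntegrableOn u (ball 0 b) μ) :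
    IntegrableOn (fun z => u z / (‖z‖ * Real.log (1 / ‖z‖)) ^ 2) (norm ⁻¹' Set.Ico a b) μ := by
  have hsub : norm ⁻¹' Set.Ico a b ⊆ ball (0 : E) b := fun z hz => mem_ball_zero_iff.2 hz.2
  have hmeas : Measurable fun z : E => (‖z‖ * Real.log (1 / ‖z‖)) ^ 2 := by fun_prop
  refine ((hint.mono_set hsub).const_mul ((a * Real.log (1 / b)) ^ 2)⁻¹).mono'
    ((hint.mono_set hsub).aestronglyMeasurable.aemeasurable.div
      hmeas.aemeasurable).aestronglyMeasurable ?_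
  refine (ae_restrict_iff' (measurableSet_Ico.preimage measurable_norm)).2 (ae_of_all _ ?_)
  intro z hz
  have huz := hu z (hsub hz)
  rw [Real.norm_of_nonneg (by positivity), div_eq_mul_inv, mul_comm]
  exact mul_le_mul_of_nonneg_right (inv_sq_mul_log_le_of_mem_Ico ha hb hz) huz

theorem setIntegral_annulus_div_sq_log_le (ha : 0 < a) (hb : b < 1)
    (hu : ∀ z ∈ ball (0 : E) b, 0 ≤ u z) (hint : IntegrableOn u (ball 0 b) μ) :
    ∫ z in norm ⁻¹' Set.Ico a b, u z / (‖z‖ * Real.log (1 / ‖z‖)) ^ 2 ∂μ ≤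
      ((a * Real.log (1 / b)) ^ 2)⁻¹ * ∫ z in ball 0 b, u z ∂μ := by
  have hsub : norm ⁻¹' Set.Ico a b ⊆ ball (0 : E) b := fun z hz => mem_ball_zero_iff.2 hz.2
  calc ∫ z in norm ⁻¹' Set.Ico a b, u z / (‖z‖ * Real.log (1 / ‖z‖)) ^ 2 ∂μ
      ≤ ∫ z in norm ⁻¹' Set.Ico a b, ((a * Real.log (1 / b)) ^ 2)⁻¹ * u z ∂μ := by
        refine setIntegral_mono_on (integrableOn_annulus_div_sq_log ha hb hu hint)
          ((hint.mono_set hsub).const_mul _) (measurableSet_Ico.preimage measurable_norm) ?_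
        intro z hz
        rw [div_eq_mul_inv, mul_comm]
        exact mul_le_mul_of_nonneg_right (inv_sq_mul_log_le_of_mem_Ico ha hb hz) (hu z (hsub hz))
    _ ≤ ((a * Real.log (1 / b)) ^ 2)⁻¹ * ∫ z in ball 0 b, u z ∂μ := by
        rw [integral_const_mul]
        exact mul_le_mul_of_nonneg_left (setIntegral_mono_set hint
          ((ae_restrict_iff' measurableSet_ball).2 (ae_of_all _ hu)) (LE.le.eventuallyLE hsub))
          (by positivity)

theorem setIntegral_annulus_div_sq_log_le_of_le (ha : 0 < a) (haε : a ≤ ε) (hb : b < 1)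
    (hu : ∀ z ∈ ball (0 : E) b, 0 ≤ u z) (hint : IntegrableOn u (ball 0 b) μ) :
    ∫ z in {z : E | ε < ‖z‖ ∧ ‖z‖ < b}, u z / (‖z‖ * Real.log (1 / ‖z‖)) ^ 2 ∂μ ≤
      ∫ z in norm ⁻¹' Set.Ico a b, u z / (‖z‖ * Real.log (1 / ‖z‖)) ^ 2 ∂μ :=
  setIntegral_mono_set (integrableOn_annulus_div_sq_log ha hb hu hint)
    ((ae_restrict_iff' (measurableSet_Ico.preimage measurable_norm)).2 (ae_of_all _
      fun z hz => div_nonneg (hu z (mem_ball_zero_iff.2 hz.2)) (sq_nonneg _)))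
    (Eventually.of_forall fun _ hz => ⟨haε.trans hz.1.le, hz.2⟩)

end Annulus

theorem setIntegral_preimage_Ico_eq_add_sum {α : Type*} [MeasurableSpace α] {μ : Measure α}
    {g : α → ℝ} (hg : Measurable g) {f : α → ℝ} {s : ℕ → ℝ} {b : ℝ} (hs : Antitone s)
    (hsb : s 0 ≤ b) (hf : ∀ n, IntegrableOn f (g ⁻¹' Set.Ico (s n) b) μ) (n : ℕ) :
    ∫ x in g ⁻¹' Set.Ico (s n) b, f x ∂μ =
      ∫ x in g ⁻¹' Set.Ico (s 0) b, f x ∂μ +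
        ∑ k ∈ Finset.range n, ∫ x in g ⁻¹' Set.Ico (s (k + 1)) (s k), f x ∂μ := by
  induction n with
  | zero => simp
  | succ n ih =>
    have hsplit : g ⁻¹' Set.Ico (s (n + 1)) b =
        g ⁻¹' Set.Ico (s (n + 1)) (s n) ∪ g ⁻¹' Set.Ico (s n) b := by
      rw [← Set.preimage_union,
        Set.Ico_union_Ico_eq_Ico (hs n.le_succ) ((hs n.zero_le).trans hsb)]
    rw [hsplit, setIntegral_union (Set.Ico_disjoint_Ico_same.preimage g)
      (measurableSet_Ico.preimage hg) ((hf (n + 1)).mono_set (hsplit ▸ Set.subset_union_left))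
      (hf n), ih, Finset.sum_range_succ]
    ring

theorem exp_one_lt_log_one_div {ε : ℝ} (hε : 0 < ε) (hεe : ε < Real.exp (-Real.exp 1)) :
    Real.exp 1 < Real.log (1 / ε) := by
  rw [one_div, Real.log_inv, lt_neg]
  exact (Real.log_lt_log hε hεe).trans_eq (Real.log_exp _)

theorem one_lt_log_log_one_div {ε : ℝ} (hε : 0 < ε) (hεe : ε < Real.exp (-Real.exp 1)) :
    1 < Real.log (Real.log (1 / ε)) := by
  have hL := exp_one_lt_log_one_div hε hεe
  rwa [Real.lt_log_iff_exp_lt ((Real.exp_pos 1).trans hL)]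

theorem exists_inv_two_pow_le_and_harmonic_le {ε : ℝ} (hε : 0 < ε)
    (hεe : ε < Real.exp (-Real.exp 1)) :
    ∃ n : ℕ, ((2 : ℝ) ^ n)⁻¹ ≤ ε ∧ (harmonic n : ℝ) ≤ 3 * Real.log (Real.log (1 / ε)) := by
  set L := Real.log (1 / ε)
  have hlogL := one_lt_log_log_one_div hε hεe
  have hL2 : 2 < L := by linarith [exp_one_lt_log_one_div hε hεe, Real.exp_one_gt_d9]
  have hlog2 := Real.log_two_gt_d9
  set n := ⌈L / Real.log 2⌉₊
  have hLn : L ≤ n * Real.log 2 := (div_le_iff₀ (by positivity)).1 (Nat.le_ceil _)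
  have hn2L : (n : ℝ) ≤ 2 * L := by
    have := Nat.ceil_lt_add_one (show 0 ≤ L / Real.log 2 by positivity)
    have : L / Real.log 2 ≤ 3 / 2 * L := by
      rw [div_le_iff₀ (by positivity)]; nlinarith
    linarith
  refine ⟨n, ?_, ?_⟩
  · rw [inv_le_comm₀ (by positivity) hε, ← one_div]
    calc 1 / ε = Real.exp L := (Real.exp_log (by positivity)).symm
      _ ≤ Real.exp (n * Real.log 2) := Real.exp_le_exp.2 hLn
      _ = 2 ^ n := by rw [← Real.log_pow, Real.exp_log (by positivity)]
  · have hn : (0 : ℝ) < n := by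
      have : 0 < n * Real.log 2 := by linarith
      exact pos_of_mul_pos_left this (by positivity)
    calc (harmonic n : ℝ) ≤ 1 + Real.log n := harmonic_le_one_add_log n
      _ ≤ 1 + Real.log (2 * L) := by gcongr
      _ = 1 + Real.log 2 + Real.log L := by rw [Real.log_mul two_ne_zero (by linarith)]; ring
      _ ≤ 3 * Real.log L := by linarith [Real.log_two_lt_d9]

theorem Complex.volume_real_ball (a : ℂ) {r : ℝ} (hr : 0 ≤ r) :
    volume.real (ball a r) = Real.pi * r ^ 2 := by
  simp [measureReal_def, ENNReal.toReal_ofReal hr, mul_comm]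

theorem setAverage_ball_half_le (u : ℂ → ℝ) {r : ℝ} (hr : 0 < r)
    (hu : IntegrableOn u (ball 0 r)) :
    ⨍ z in ball (0 : ℂ) (r / 2), u z ≤
      (⨍ z in ball (0 : ℂ) r, u z) +
        4 * ⨍ z in ball (0 : ℂ) r, |u z - ⨍ w in ball (0 : ℂ) r, u w| := by
  have h := setAverage_le_setAverage_add_oscillation (ball_subset_ball (half_le_self hr.le))
    (measure_ball_pos volume (0 : ℂ) (half_pos hr)).ne' measure_ball_lt_top.ne hu
  rwa [Complex.volume_real_ball _ hr.le, Complex.volume_real_ball _ (half_pos hr).le,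
    show Real.pi * r ^ 2 / (Real.pi * (r / 2) ^ 2) = 4 by field_simp; ring] at h

theorem exists_setAverage_ball_two_pow_le_mul {u : ℂ → ℝ} {R : ℝ} (hR : 0 < R)
    (hu : ∀ z ∈ ball (0 : ℂ) R, 0 ≤ u z) (hint : IntegrableOn u (ball 0 R))
    (hFMO : IsBoundedUnder (· ≤ ·) (nhdsWithin 0 (Set.Ioi 0))
      fun r : ℝ => ⨍ z in ball (0 : ℂ) r, |u z - ⨍ w in ball (0 : ℂ) r, u w|) :
    ∃ ρ A : ℝ, 0 < ρ ∧ ρ ≤ R ∧ 0 ≤ A ∧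
      ∀ k : ℕ, ⨍ z in ball (0 : ℂ) (ρ / 2 ^ k), u z ≤ A * (k + 1) := by
  obtain ⟨M, hM⟩ := hFMO
  obtain ⟨δ, hδ, hosc⟩ := (nhdsGT_basis (0 : ℝ)).eventually_iff.1 (eventually_map.1 hM)
  set ρ := min (δ / 2) R
  have hρ : 0 < ρ := lt_min (half_pos hδ) hR
  have hρδ : ρ < δ := (min_le_left _ _).trans_lt (half_lt_self hδ)
  have hρR : ρ ≤ R := min_le_right _ _
  have hM : 0 ≤ M := (setAverage_nonneg_of_nonneg measurableSet_ball fun _ _ => abs_nonneg _).trans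
    (hosc ⟨hρ, hρδ⟩)
  have hm : 0 ≤ ⨍ z in ball (0 : ℂ) ρ, u z :=
    setAverage_nonneg_of_nonneg measurableSet_ball fun z hz => hu z (ball_subset_ball hρR hz)
  refine ⟨ρ, (⨍ z in ball (0 : ℂ) ρ, u z) + 4 * M, hρ, hρR, by positivity, fun k => ?_⟩
  have hgrowth := apply_div_two_pow_le_add_mul (g := fun r => ⨍ z in ball (0 : ℂ) r, u z)
    (A := 4 * M) (fun r hr hrρ => (setAverage_ball_half_le u hr
      (hint.mono_set (ball_subset_ball (hrρ.trans hρR)))).trans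
        (by linarith [hosc ⟨hr, hrρ.trans_lt hρδ⟩])) hρ k
  have hk : (0 : ℝ) ≤ k := k.cast_nonneg
  nlinarith

theorem setIntegral_annulus_half_div_sq_log_le {u : ℂ → ℝ} {r : ℝ} (hr : 0 < r) (hr1 : r < 1)
    (hu : ∀ z ∈ ball (0 : ℂ) r, 0 ≤ u z) (hint : IntegrableOn u (ball 0 r)) :
    ∫ z in norm ⁻¹' Set.Ico (r / 2) r, u z / (‖z‖ * Real.log (1 / ‖z‖)) ^ 2 ≤
      4 * Real.pi * (⨍ z in ball (0 : ℂ) r, u z) / Real.log (1 / r) ^ 2 := by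
  have h := setIntegral_annulus_div_sq_log_le (half_pos hr) hr1 hu hint
  rw [← measure_smul_setAverage _ measure_ball_lt_top.ne, Complex.volume_real_ball _ hr.le,
    smul_eq_mul] at h
  refine h.trans_eq ?_
  have hlog : Real.log (1 / r) ≠ 0 := (Real.log_pos ((one_lt_div hr).2 hr1)).ne'
  field_simp
  ring

theorem setIntegral_annulus_two_pow_le {u : ℂ → ℝ} {ρ A : ℝ} (hρ : 0 < ρ) (hρ2 : ρ ≤ 1 / 2)
    (hu : ∀ z ∈ ball (0 : ℂ) ρ, 0 ≤ u z) (hint : IntegrableOn u (ball 0 ρ))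
    (hA : ∀ k : ℕ, ⨍ z in ball (0 : ℂ) (ρ / 2 ^ k), u z ≤ A * (k + 1)) (k : ℕ) :
    ∫ z in norm ⁻¹' Set.Ico (ρ / 2 ^ (k + 1)) (ρ / 2 ^ k),
        u z / (‖z‖ * Real.log (1 / ‖z‖)) ^ 2 ≤
      4 * Real.pi * A / Real.log 2 ^ 2 * ((k : ℝ) + 1)⁻¹ := by
  set r := ρ / 2 ^ k
  have hr : 0 < r := by positivity
  have hrρ : r ≤ ρ := div_le_self hρ.le (one_le_pow₀ one_le_two)
  have hr2 : (2 : ℝ) ^ (k + 1) ≤ 1 / r := by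
    rw [le_one_div (by positivity) hr, pow_succ, ← div_div]
    exact div_le_div_of_nonneg_right hρ2 (by positivity) |>.trans_eq (by ring)
  have hlog : (k + 1) * Real.log 2 ≤ Real.log (1 / r) := by
    calc (k + 1) * Real.log 2 = Real.log (2 ^ (k + 1)) := by rw [Real.log_pow]; push_cast; ring
      _ ≤ Real.log (1 / r) := Real.log_le_log (by positivity) hr2
  have hmean : ⨍ z in ball (0 : ℂ) r, u z ≤ A * (k + 1) := hA k
  have hmean0 : 0 ≤ ⨍ z in ball (0 : ℂ) r, u z :=
    setAverage_nonneg_of_nonneg measurableSet_ball fun z hz => hu z (ball_subset_ball hrρ hz)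
  have h := setIntegral_annulus_half_div_sq_log_le hr (by linarith)
    (fun z hz => hu z (ball_subset_ball hrρ hz)) (hint.mono_set (ball_subset_ball hrρ))
  rw [div_div, ← pow_succ] at h
  refine h.trans ?_
  calc 4 * Real.pi * (⨍ z in ball (0 : ℂ) r, u z) / Real.log (1 / r) ^ 2
      ≤ 4 * Real.pi * (A * (k + 1)) / ((k + 1) * Real.log 2) ^ 2 := by
        have hlog2 := Real.log_pos one_lt_two
        gcongr
        exact mul_nonneg (by positivity) (hmean0.trans hmean)
    _ = 4 * Real.pi * A / Real.log 2 ^ 2 * ((k : ℝ) + 1)⁻¹ := by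
        field_simp

theorem setIntegral_annulus_two_pow_le_add_harmonic {u : ℂ → ℝ} {ρ b A : ℝ} (hρ : 0 < ρ)
    (hρ2 : ρ ≤ 1 / 2) (hρb : ρ ≤ b) (hb : b < 1) (hu : ∀ z ∈ ball (0 : ℂ) b, 0 ≤ u z)
    (hint : IntegrableOn u (ball 0 b))
    (hA : ∀ k : ℕ, ⨍ z in ball (0 : ℂ) (ρ / 2 ^ k), u z ≤ A * (k + 1)) (n : ℕ) :
    ∫ z in norm ⁻¹' Set.Ico (ρ / 2 ^ n) b, u z / (‖z‖ * Real.log (1 / ‖z‖)) ^ 2 ≤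
      (∫ z in norm ⁻¹' Set.Ico ρ b, u z / (‖z‖ * Real.log (1 / ‖z‖)) ^ 2) +
        4 * Real.pi * A / Real.log 2 ^ 2 * harmonic n := by
  have hanti : Antitone fun k : ℕ => ρ / 2 ^ k := fun i j hij =>
    div_le_div_of_nonneg_left hρ.le (by positivity) (pow_le_pow_right₀ one_le_two hij)
  rw [setIntegral_preimage_Ico_eq_add_sum measurable_norm hanti (by simpa using hρb)
    (fun k => integrableOn_annulus_div_sq_log (by positivity) hb hu hint) n]
  simp only [pow_zero, div_one, harmonic, Rat.cast_sum, Rat.cast_inv, Finset.mul_sum]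
  gcongr with k
  push_cast
  exact setIntegral_annulus_two_pow_le hρ hρ2 (fun z hz => hu z (ball_subset_ball hρb hz))
    (hint.mono_set (ball_subset_ball hρb)) hA k

theorem fmo_annulus_integral_estimate_general
    (D : Set ℂ)
    (hball : ball (0 : ℂ) (Real.exp (-1)) ⊆ D)
    (u : ℂ → ℝ) (hpos : ∀ z ∈ D, 0 ≤ u z)
    (hint : IntegrableOn u (ball (0 : ℂ) (Real.exp (-1))))
    (hFMO : IsBoundedUnder (· ≤ ·) (nhdsWithin 0 (Set.Ioi (0 : ℝ)))
      (fun ε : ℝ => (volume (ball (0 : ℂ) ε)).toReal⁻¹ *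
        ∫ z in ball (0 : ℂ) ε,
          |u z - (volume (ball (0 : ℂ) ε)).toReal⁻¹ * ∫ w in ball (0 : ℂ) ε, u w|)) :
    ∃ C : ℝ, ∀ ε : ℝ, 0 < ε → ε < Real.exp (-Real.exp 1) →
      (∫ z in {z : ℂ | ε < ‖z‖ ∧ ‖z‖ < Real.exp (-1)},
          u z / (‖z‖ * Real.log (1 / ‖z‖)) ^ 2)
        ≤ C * Real.log (Real.log (1 / ε)) := by
  have hu : ∀ z ∈ ball (0 : ℂ) (Real.exp (-1)), 0 ≤ u z := fun z hz => hpos z (hball hz)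
  have he : Real.exp (-1) ≤ 1 / 2 := by
    rw [Real.exp_neg, one_div]
    exact inv_anti₀ two_pos (by linarith [Real.exp_one_gt_d9])
  have he1 : Real.exp (-1) < 1 := he.trans_lt (by norm_num)
  obtain ⟨ρ, A, hρ, hρe, hA₀, hA⟩ :=
    exists_setAverage_ball_two_pow_le_mul (Real.exp_pos _) hu hint
      (by simpa only [← measureReal_def, ← smul_eq_mul, ← setAverage_eq] using hFMO)
  set C₀ := ∫ z in norm ⁻¹' Set.Ico ρ (Real.exp (-1)), u z / (‖z‖ * Real.log (1 / ‖z‖)) ^ 2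
  have hC₀ : 0 ≤ C₀ := setIntegral_nonneg (measurableSet_Ico.preimage measurable_norm)
    fun z hz => div_nonneg (hu z (mem_ball_zero_iff.2 hz.2)) (sq_nonneg _)
  set C := 4 * Real.pi * A / Real.log 2 ^ 2
  have hC : 0 ≤ C := by positivity
  refine ⟨C₀ + 3 * C, fun ε hε hεe => ?_⟩
  obtain ⟨n, hn, hharm⟩ := exists_inv_two_pow_le_and_harmonic_le hε hεe
  have hρn : ρ / 2 ^ n ≤ ε :=
    (div_le_div_of_nonneg_right (hρe.trans he1.le) (by positivity)).trans
      ((one_div _).trans_le hn)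
  calc _ ≤ _ := setIntegral_annulus_div_sq_log_le_of_le (by positivity) hρn he1 hu hint
    _ ≤ C₀ + C * harmonic n :=
        setIntegral_annulus_two_pow_le_add_harmonic hρ (hρe.trans he) hρe he1 hu hint hA n
    _ ≤ (C₀ + 3 * C) * Real.log (Real.log (1 / ε)) := by
        nlinarith [one_lt_log_log_one_div hε hεe]

/-- If `u : D → ℝ` is nonnegative, has finite mean oscillation at `0 ∈ D` and is
integrable on `B(0, e⁻¹) ⊆ D`, then there is a constant `C` such that for all
`ε ∈ (0, e^{-e})`,
`∫_{ε<|z|<e⁻¹} u(z)/(|z| log(1/|z|))² dxdy ≤ C · log log (1/ε)`. -/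
theorem fmo_annulus_integral_estimate
    (D : Set ℂ) (hD : IsOpen D) (h0 : (0 : ℂ) ∈ D)
    (hball : ball (0 : ℂ) (Real.exp (-1)) ⊆ D)
    (u : ℂ → ℝ) (hpos : ∀ z ∈ D, 0 ≤ u z)
    (hint : IntegrableOn u (ball (0 : ℂ) (Real.exp (-1))))
    (hFMO : IsBoundedUnder (· ≤ ·) (nhdsWithin 0 (Set.Ioi (0 : ℝ)))
      (fun ε : ℝ => (volume (ball (0 : ℂ) ε)).toReal⁻¹ *
        ∫ z in ball (0 : ℂ) ε,
          |u z - (volume (ball (0 : ℂ) ε)).toReal⁻¹ * ∫ w in ball (0 : ℂ) ε, u w|)) :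
    ∃ C : ℝ, ∀ ε : ℝ, 0 < ε → ε < Real.exp (-Real.exp 1) →
      (∫ z in {z : ℂ | ε < ‖z‖ ∧ ‖z‖ < Real.exp (-1)},
          u z / (‖z‖ * Real.log (1 / ‖z‖)) ^ 2)
        ≤ C * Real.log (Real.log (1 / ε)) :=
  fmo_annulus_integral_estimate_general D hball u hpos hint hFMO
end

section
/- Let Φ: [0,∞] → [0,∞] be non-decreasing and H(t) = log Φ(t). The condition ∫_Δ^∞ dH(t)/t = ∞ (Lebesgue–Stieltjes) for some Δ > 0 is equivalent to the condition ∫_Δ^∞ H(t) dt/t² = ∞ for some Δ > 0. -/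
/-!
Writing `H t = H Δ + μ_H (Δ, t]` and exchanging the order of integration, with
`∫_s^∞ dt / t² = 1 / s`, gives `∫_Δ^∞ H t dt / t² = H Δ / Δ + ∫_(Δ,∞) dH(s) / s` whenever
`H Δ ≥ 0`. Both integrals are finite over every `(a, b]` with `a > 0`, so whether they are
infinite does not depend on `Δ`; this settles the case where `H` is nonnegative somewhere on
`(0, ∞)`. Otherwise `H < 0` there: the second integral vanishes, and `H` is bounded above, so
`μ_H (Δ, ∞)` and with it the first integral are finite.
-/

open MeasureTheory ENNReal Set Filter Topology

theorem lintegral_Ioi_ofReal_one_div_sq {s : ℝ} (hs : 0 < s) :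
    ∫⁻ t in Ioi s, ENNReal.ofReal (1 / t ^ 2) = ENNReal.ofReal (1 / s) := by
  have hderiv : ∀ x ∈ Ici s, HasDerivAt (fun t : ℝ => -(1 / t)) (1 / x ^ 2) x := fun x hx => by
    simpa [one_div] using (hasDerivAt_inv (hs.trans_le hx).ne').fun_neg
  have hpos : ∀ x ∈ Ioi s, (0 : ℝ) ≤ 1 / x ^ 2 := fun x _ => by positivity
  have htend : Tendsto (fun t : ℝ => -(1 / t)) atTop (𝓝 0) := by
    simpa [one_div] using (tendsto_inv_atTop_zero (𝕜 := ℝ)).neg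
  rw [← ofReal_integral_eq_lintegral_ofReal
      (integrableOn_Ioi_deriv_of_nonneg' hderiv hpos htend)
      ((ae_restrict_iff' measurableSet_Ioi).2 (.of_forall hpos)),
    integral_Ioi_of_hasDerivAt_of_nonneg' hderiv hpos htend]
  simp

theorem setLIntegral_measure_Ioc_mul {μ ν : Measure ℝ} [SFinite μ] [SFinite ν]
    {g : ℝ → ℝ≥0∞} (hg : Measurable g) (Δ : ℝ) :
    ∫⁻ t in Ioi Δ, μ (Ioc Δ t) * g t ∂ν = ∫⁻ s in Ioi Δ, ∫⁻ t in Ici s, g t ∂ν ∂μ := by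
  let F : ℝ → ℝ → ℝ≥0∞ := fun t s => {p : ℝ × ℝ | p.2 ≤ p.1}.indicator (fun p => g p.1) (t, s)
  have hF : Measurable (Function.uncurry F) :=
    (hg.comp measurable_fst).indicator (measurableSet_le measurable_snd measurable_fst)
  calc ∫⁻ t in Ioi Δ, μ (Ioc Δ t) * g t ∂ν
      = ∫⁻ t in Ioi Δ, ∫⁻ s in Ioi Δ, F t s ∂μ ∂ν := by
        refine setLIntegral_congr_fun measurableSet_Ioi fun t _ => ?_
        rw [show (fun s => F t s) = (Iic t).indicator fun _ => g t by ext s; simp [F, indicator],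
          lintegral_indicator_const measurableSet_Iic, Measure.restrict_apply measurableSet_Iic,
          Iic_inter_Ioi, mul_comm]
    _ = ∫⁻ s in Ioi Δ, ∫⁻ t in Ioi Δ, F t s ∂ν ∂μ := lintegral_lintegral_swap hF.aemeasurable
    _ = ∫⁻ s in Ioi Δ, ∫⁻ t in Ici s, g t ∂ν ∂μ := by
        refine setLIntegral_congr_fun measurableSet_Ioi fun s hs => ?_
        rw [show (fun t => F t s) = (Ici s).indicator g by ext t; simp [F, indicator],
          lintegral_indicator measurableSet_Ici, Measure.restrict_restrict measurableSet_Ici,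
          inter_eq_left.2 (Ici_subset_Ioi.2 hs)]

theorem setLIntegral_ofReal_one_div_ne_top {μ : Measure ℝ} {s : Set ℝ} {a : ℝ} (ha : 0 < a)
    (hs : s ⊆ Ioi a) (hμs : μ s ≠ ∞) : ∫⁻ x in s, ENNReal.ofReal (1 / x) ∂μ ≠ ∞ := by
  refine (setLIntegral_lt_top_of_le_nnreal hμs ⟨Real.toNNReal (1 / a), fun x hx => ?_⟩).ne
  exact ENNReal.ofReal_le_ofReal (one_div_le_one_div_of_le ha (hs hx).le)

theorem setLIntegral_Ioi_eq_top_iff_of_le {ν : Measure ℝ} {f : ℝ → ℝ≥0∞} {a b : ℝ}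
    (hab : a ≤ b) (hfin : ∫⁻ x in Ioc a b, f x ∂ν ≠ ∞) :
    ∫⁻ x in Ioi a, f x ∂ν = ∞ ↔ ∫⁻ x in Ioi b, f x ∂ν = ∞ := by
  rw [← Ioc_union_Ioi_eq_Ioi hab, lintegral_union measurableSet_Ioi Ioc_disjoint_Ioi_same,
    ENNReal.add_eq_top, or_iff_right hfin]

theorem exists_setLIntegral_Ioi_eq_top_iff {ν : Measure ℝ} {f : ℝ → ℝ≥0∞} {Δ₀ : ℝ}
    (hΔ₀ : 0 < Δ₀) (hfin : ∀ a b, 0 < a → ∫⁻ x in Ioc a b, f x ∂ν ≠ ∞) :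
    (∃ Δ, 0 < Δ ∧ ∫⁻ x in Ioi Δ, f x ∂ν = ∞) ↔ ∫⁻ x in Ioi Δ₀, f x ∂ν = ∞ := by
  refine ⟨fun ⟨Δ, hΔ, htop⟩ => ?_, fun h => ⟨Δ₀, hΔ₀, h⟩⟩
  rcases le_total Δ Δ₀ with hle | hle
  · exact (setLIntegral_Ioi_eq_top_iff_of_le hle (hfin Δ Δ₀ hΔ)).1 htop
  · exact top_le_iff.1 (htop ▸ lintegral_mono_set (Ioi_subset_Ioi hle))

namespace StieltjesFunction

variable (H : StieltjesFunction ℝ)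

theorem setLIntegral_Ioc_div_sq_ne_top {a : ℝ} (ha : 0 < a) (b : ℝ) :
    ∫⁻ t in Ioc a b, ENNReal.ofReal (H t / t ^ 2) ≠ ∞ := by
  refine (setLIntegral_lt_top_of_le_nnreal (by simp)
    ⟨Real.toNNReal (max (H b) 0 / a ^ 2), fun t ht => ?_⟩).ne
  exact ENNReal.ofReal_le_ofReal (div_le_div₀ (le_max_right _ _)
    ((H.mono ht.2).trans (le_max_left _ _)) (by positivity) (pow_le_pow_left₀ ha.le ht.1.le 2))

theorem lintegral_Ioi_div_sq {Δ : ℝ} (hΔ : 0 < Δ) (hHΔ : 0 ≤ H Δ) :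
    ∫⁻ t in Ioi Δ, ENNReal.ofReal (H t / t ^ 2) =
      ENNReal.ofReal (H Δ) * ENNReal.ofReal (1 / Δ) +
        ∫⁻ s in Ioi Δ, ENNReal.ofReal (1 / s) ∂H.measure := by
  have hsplit : ∀ t ∈ Ioi Δ, ENNReal.ofReal (H t / t ^ 2) =
      ENNReal.ofReal (H Δ) * ENNReal.ofReal (1 / t ^ 2) +
        H.measure (Ioc Δ t) * ENNReal.ofReal (1 / t ^ 2) := fun t ht => by
    have hmono : H Δ ≤ H t := H.mono ht.le
    rw [H.measure_Ioc, ← add_mul, ← ENNReal.ofReal_add hHΔ (sub_nonneg.2 hmono),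
      add_sub_cancel, ← ENNReal.ofReal_mul (hHΔ.trans hmono), mul_one_div]
  have hmeas : Measurable fun t : ℝ => ENNReal.ofReal (1 / t ^ 2) := by fun_prop
  rw [setLIntegral_congr_fun _root_.measurableSet_Ioi hsplit,
    lintegral_add_left (hmeas.const_mul _),
    lintegral_const_mul _ hmeas, lintegral_Ioi_ofReal_one_div_sq hΔ,
    setLIntegral_measure_Ioc_mul hmeas]
  congr 1
  refine setLIntegral_congr_fun _root_.measurableSet_Ioi fun s hs => ?_
  rw [← restrict_Ioi_eq_restrict_Ici, lintegral_Ioi_ofReal_one_div_sq (hΔ.trans hs)]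

theorem measure_Ioi_ne_top_of_bddAbove (hH : BddAbove (range H)) (x : ℝ) :
    H.measure (Ioi x) ≠ ∞ := by
  rw [H.measure_Ioi (tendsto_atTop_ciSup H.mono hH)]
  exact ENNReal.ofReal_ne_top

end StieltjesFunction

theorem stieltjes_integral_infinite_iff_integral_div_sq_infinite_general
    (H : StieltjesFunction ℝ) :
    (∃ Δ : ℝ, 0 < Δ ∧ ∫⁻ t in Set.Ioi Δ, ENNReal.ofReal (1 / t) ∂H.measure = ∞) ↔
    (∃ Δ : ℝ, 0 < Δ ∧ ∫⁻ t in Set.Ioi Δ, ENNReal.ofReal (H t / t ^ 2) = ∞) := by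
  by_cases hpos : ∃ T, 0 < T ∧ 0 ≤ H T
  · obtain ⟨T, hT, hHT⟩ := hpos
    rw [exists_setLIntegral_Ioi_eq_top_iff hT
        fun a b ha => setLIntegral_ofReal_one_div_ne_top ha Ioc_subset_Ioi_self (by simp),
      exists_setLIntegral_Ioi_eq_top_iff hT
        fun a b ha => H.setLIntegral_Ioc_div_sq_ne_top ha b,
      H.lintegral_Ioi_div_sq hT hHT, ENNReal.add_eq_top, or_iff_right (by finiteness)]
  · push Not at hpos
    have hbdd : BddAbove (range H) := ⟨0, forall_mem_range.2 fun x =>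
      (H.mono (le_max_left x 1)).trans (hpos _ (one_pos.trans_le (le_max_right x 1))).le⟩
    refine iff_of_false (fun ⟨Δ, hΔ, htop⟩ => ?_) fun ⟨Δ, hΔ, htop⟩ => ?_
    · exact setLIntegral_ofReal_one_div_ne_top hΔ subset_rfl
        (H.measure_Ioi_ne_top_of_bddAbove hbdd Δ) htop
    · have hzero : ∀ t ∈ Ioi Δ, ENNReal.ofReal (H t / t ^ 2) = 0 := fun t ht =>
        ENNReal.ofReal_eq_zero.2
          (div_nonpos_of_nonpos_of_nonneg (hpos t (hΔ.trans ht)).le (sq_nonneg t))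
      rw [setLIntegral_congr_fun measurableSet_Ioi hzero, lintegral_zero] at htop
      exact zero_ne_top htop

/-- Let `Φ : [0,∞) → [0,∞)` be non-decreasing and `H(t) = log Φ(t)` (given as a
Stieltjes function). Then the Lebesgue–Stieltjes integral `∫_Δ^∞ dH(t)/t` is
infinite for some `Δ > 0` if and only if the Lebesgue integral
`∫_Δ^∞ H(t) dt/t²` is infinite for some `Δ > 0`. -/
theorem stieltjes_integral_infinite_iff_integral_div_sq_infinite
    (Φ : ℝ → ℝ) (hΦmono : MonotoneOn Φ (Set.Ici 0)) (hΦpos : ∀ t ≥ 0, 0 ≤ Φ t)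
    (H : StieltjesFunction ℝ) (hH : ∀ t : ℝ, 0 < t → H t = Real.log (Φ t)) :
    (∃ Δ : ℝ, 0 < Δ ∧ ∫⁻ t in Set.Ioi Δ, ENNReal.ofReal (1 / t) ∂H.measure = ∞) ↔
    (∃ Δ : ℝ, 0 < Δ ∧ ∫⁻ t in Set.Ioi Δ, ENNReal.ofReal (H t / t ^ 2) = ∞) :=
  stieltjes_integral_infinite_iff_integral_div_sq_infinite_general H
end

section
/- Let Q: 𝔹 → [0,∞] be a measurable function on the unit disk 𝔹 ⊆ ℂ with ∫_𝔹 Φ(Q(z)) dxdy < ∞, where Φ: [0,∞] → [0,∞] is a non-decreasing convex function satisfying ∫_δ^∞ dτ / (τ Φ⁻¹(τ)) = ∞ for some δ > Φ(0). Then ∫_0^1 dr / (r q(r)) = ∞, where q(r) is the average of Q over the circle |z| = r. -/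
/-!
Jensen's inequality on the circle `|z| = r` gives `Φ (q r) ≤ M r`, where `M r` is the mean of
`Φ ∘ Q` over that circle, and polar coordinates give `∫₀¹ r M(r) dr ≤ (2π)⁻¹ ∫_𝔹 Φ(Q) < ∞`.
The substitution `τ = δ / r²` turns the divergence hypothesis into
`∫₀¹ dr / (r Φ⁻¹(δ / r²)) = ∞`. Where `r² M(r) < δ`, we have `q(r) ≤ Φ⁻¹(δ / r²)`, so
`1 / (r q(r))` dominates this divergent integrand; on the remaining set `1 / r ≤ r M(r) / δ`, so
there the integrand is at most `r M(r) / (δ Φ⁻¹(δ))`, which is integrable because `Φ⁻¹(δ) > 0`.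
-/

open MeasureTheory ENNReal Metric

/-- The generalized inverse (restricted to `t ≥ 0`, with `inf ∅ = ∞`) of a real
function, valued in `[0,∞]`. -/
noncomputable def genInvR (G : ℝ → ℝ) (τ : ℝ) : ℝ≥0∞ :=
  sInf (ENNReal.ofReal '' {t : ℝ | 0 ≤ t ∧ τ ≤ G t})

open Real Set Filter Topology Function

lemma ConvexOn.continuousWithinAt_Ici_of_monotoneOn {f : ℝ → ℝ} {y : ℝ}
    (hf : ConvexOn ℝ (Ici y) f) (hmono : MonotoneOn f (Ici y)) :
    ContinuousWithinAt f (Ici y) y := by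
  have hchord : ∀ t ∈ Icc y (y + 1), f t ≤ f y + (t - y) * (f (y + 1) - f y) := by
    rintro t ⟨hyt, hty⟩
    have := hf.2 self_mem_Ici (show y + 1 ∈ Ici y by simp) (by linarith : 0 ≤ 1 - (t - y))
      (by linarith : 0 ≤ t - y) (by ring)
    simp only [smul_eq_mul, show (1 - (t - y)) * y + (t - y) * (y + 1) = t by ring] at this
    linarith
  have hlim : Tendsto (fun t => f y + (t - y) * (f (y + 1) - f y)) (𝓝[≥] y) (𝓝 (f y)) := by
    have : Continuous fun t => f y + (t - y) * (f (y + 1) - f y) := by fun_prop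
    simpa using (this.tendsto y).mono_left nhdsWithin_le_nhds
  refine tendsto_of_tendsto_of_tendsto_of_le_of_le' tendsto_const_nhds hlim ?_ ?_
  · filter_upwards [self_mem_nhdsWithin] with t ht using hmono self_mem_Ici ht ht
  · filter_upwards [Icc_mem_nhdsGE (lt_add_one y)] with t ht using hchord t ht

lemma MonotoneOn.measurable_comp_of_nonneg {Φ : ℝ → ℝ} (hΦ : MonotoneOn Φ (Ici 0))
    {α : Type*} [MeasurableSpace α] {f : α → ℝ} (hf : Measurable f) (hf0 : ∀ x, 0 ≤ f x) :
    Measurable fun x => Φ (f x) := by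
  have hmono : Monotone fun t => Φ (max t 0) := fun a b hab =>
    hΦ (le_max_right a 0) (le_max_right b 0) (max_le_max hab le_rfl)
  convert hmono.measurable.comp hf using 2 with x
  simp [max_eq_left (hf0 x)]

lemma genInvR_mono (Φ : ℝ → ℝ) : Monotone (genInvR Φ) :=
  fun _ _ h => sInf_le_sInf (image_mono fun _ ht => ⟨ht.1, h.trans ht.2⟩)

lemma ofReal_le_genInvR {Φ : ℝ → ℝ} (hΦ : MonotoneOn Φ (Ici 0)) {t τ : ℝ} (ht : 0 ≤ t)
    (hτ : Φ t < τ) : ENNReal.ofReal t ≤ genInvR Φ τ := by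
  refine le_sInf ?_
  rintro _ ⟨s, ⟨hs, hτs⟩, rfl⟩
  exact ENNReal.ofReal_le_ofReal <| le_of_not_gt fun hst =>
    (hτ.trans_le hτs).not_ge (hΦ hs ht hst.le)

lemma genInvR_pos {Φ : ℝ → ℝ} (hΦ : MonotoneOn Φ (Ici 0))
    (hΦc : ContinuousWithinAt Φ (Ici 0) 0) {τ : ℝ} (hτ : Φ 0 < τ) : 0 < genInvR Φ τ := by
  obtain ⟨t, hΦt, ht⟩ := (((hΦc.eventually (gt_mem_nhds hτ)).filter_mono
    (nhdsWithin_mono _ Ioi_subset_Ici_self)).and self_mem_nhdsWithin).exists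
  exact (ENNReal.ofReal_pos.2 ht).trans_le (ofReal_le_genInvR hΦ (le_of_lt ht) hΦt)

lemma lintegral_Ioi_eq_lintegral_Ioo_comp_div_sq {δ : ℝ} (hδ : 0 < δ) (g : ℝ → ℝ≥0∞) :
    ∫⁻ τ in Ioi δ, g τ = ∫⁻ r in Ioo 0 1, ENNReal.ofReal (2 * δ / r ^ 3) * g (δ / r ^ 2) := by
  have himage : (fun r : ℝ => δ / r ^ 2) '' Ioo 0 1 = Ioi δ := by
    ext τ
    constructor
    · rintro ⟨r, ⟨hr0, hr1⟩, rfl⟩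
      rw [mem_Ioi, lt_div_iff₀ (by positivity)]
      nlinarith [mul_lt_mul_of_pos_left (pow_lt_one₀ hr0.le hr1 two_ne_zero) hδ]
    · intro hτ
      have hτ0 : 0 < τ := hδ.trans hτ
      refine ⟨√(δ / τ), ⟨by positivity, ?_⟩, ?_⟩
      · rw [sqrt_lt' one_pos, one_pow, div_lt_one hτ0]
        exact hτ
      · simp only
        rw [sq_sqrt (by positivity)]
        field_simp
  have hderiv : ∀ r ∈ Ioo (0 : ℝ) 1,
      HasDerivWithinAt (fun r => δ / r ^ 2) (-(2 * δ / r ^ 3)) (Ioo 0 1) r := by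
    intro r hr
    have hr0 : r ≠ 0 := hr.1.ne'
    have := (hasDerivAt_const r δ).fun_div (hasDerivAt_pow 2 r) (pow_ne_zero 2 hr0)
    refine (this.congr_deriv ?_).hasDerivWithinAt
    field_simp
    ring
  have hinj : InjOn (fun r : ℝ => δ / r ^ 2) (Ioo 0 1) := by
    intro a ha b hb hab
    have hsq : a ^ 2 = b ^ 2 := by
      simpa [div_eq_div_iff, hδ.ne', ha.1.ne', hb.1.ne'] using hab.symm
    exact (pow_left_inj₀ ha.1.le hb.1.le two_ne_zero).1 hsq
  rw [← himage, lintegral_image_eq_lintegral_abs_deriv_mul measurableSet_Ioo hderiv hinj]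
  refine setLIntegral_congr_fun measurableSet_Ioo fun r hr => ?_
  rw [abs_neg, abs_of_pos (by have := hr.1; positivity)]

lemma lintegral_Ioo_inv_mul_comp_div_sq_eq_top {G : ℝ → ℝ≥0∞} {δ : ℝ} (hδ : 0 < δ)
    (hdiv : ∫⁻ τ in Ioi δ, 1 / (ENNReal.ofReal τ * G τ) = ∞) :
    ∫⁻ r in Ioo 0 1, (ENNReal.ofReal r * G (δ / r ^ 2))⁻¹ = ∞ := by
  have hcongr : ∀ r ∈ Ioo (0 : ℝ) 1, ENNReal.ofReal (2 * δ / r ^ 3) *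
      (1 / (ENNReal.ofReal (δ / r ^ 2) * G (δ / r ^ 2))) =
        2 * (ENNReal.ofReal r * G (δ / r ^ 2))⁻¹ := by
    intro r hr
    set a := ENNReal.ofReal (δ / r ^ 2)
    have ha : a ≠ 0 := (ENNReal.ofReal_pos.2 (by have := hr.1; positivity)).ne'
    have hr0 : ENNReal.ofReal r ≠ 0 := (ENNReal.ofReal_pos.2 hr.1).ne'
    have hsplit : ENNReal.ofReal (2 * δ / r ^ 3) = 2 * a * (ENNReal.ofReal r)⁻¹ := by
      rw [← ENNReal.ofReal_inv_of_pos hr.1, ← ENNReal.ofReal_ofNat 2,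
        ← ENNReal.ofReal_mul zero_le_two, ← ENNReal.ofReal_mul (by have := hr.1; positivity)]
      congr 1
      field_simp
    rw [hsplit, one_div, ENNReal.mul_inv (.inl ha) (.inl ofReal_ne_top),
      ENNReal.mul_inv (.inl hr0) (.inl ofReal_ne_top)]
    calc 2 * a * (ENNReal.ofReal r)⁻¹ * (a⁻¹ * (G (δ / r ^ 2))⁻¹)
        = 2 * (a * a⁻¹) * ((ENNReal.ofReal r)⁻¹ * (G (δ / r ^ 2))⁻¹) := by ring
      _ = _ := by rw [ENNReal.mul_inv_cancel ha ofReal_ne_top, mul_one]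
  rw [lintegral_Ioi_eq_lintegral_Ioo_comp_div_sq hδ,
    setLIntegral_congr_fun measurableSet_Ioo hcongr, lintegral_const_mul' _ _ ofNat_ne_top] at hdiv
  exact (ENNReal.mul_eq_top.1 hdiv).elim (fun h => h.2) fun h => absurd h.1 ofNat_ne_top

lemma inv_mul_comp_div_sq_le {G : ℝ → ℝ≥0∞} (hG : Monotone G) {δ r q : ℝ} (hδ : 0 < δ)
    (hr : r ∈ Ioo 0 1) {m : ℝ≥0∞} (hqm : ∀ τ, m < ENNReal.ofReal τ → ENNReal.ofReal q ≤ G τ) :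
    (ENNReal.ofReal r * G (δ / r ^ 2))⁻¹ ≤
      (ENNReal.ofReal δ * G δ)⁻¹ * (ENNReal.ofReal r * m) + 1 / ENNReal.ofReal (r * q) := by
  have hr0 : ENNReal.ofReal r ≠ 0 := (ENNReal.ofReal_pos.2 hr.1).ne'
  have hδ0 : ENNReal.ofReal δ ≠ 0 := (ENNReal.ofReal_pos.2 hδ).ne'
  rcases lt_or_ge m (ENNReal.ofReal (δ / r ^ 2)) with hm | hm
  · refine le_add_left ?_
    rw [one_div, ENNReal.ofReal_mul hr.1.le]
    exact ENNReal.inv_le_inv.2 (by gcongr; exact hqm _ hm)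
  · refine le_add_right ?_
    have hδr : δ ≤ δ / r ^ 2 :=
      le_div_self hδ.le (by have := hr.1; positivity) (pow_le_one₀ hr.1.le hr.2.le)
    have hmul : ENNReal.ofReal r * ENNReal.ofReal (δ / r ^ 2) =
        ENNReal.ofReal δ * (ENNReal.ofReal r)⁻¹ := by
      rw [← ENNReal.ofReal_inv_of_pos hr.1, ← ENNReal.ofReal_mul hr.1.le,
        ← ENNReal.ofReal_mul hδ.le]
      congr 1
      field_simp
    calc (ENNReal.ofReal r * G (δ / r ^ 2))⁻¹ ≤ (ENNReal.ofReal r * G δ)⁻¹ :=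
          ENNReal.inv_le_inv.2 (by gcongr; exact hG hδr)
      _ = (ENNReal.ofReal δ * G δ)⁻¹ * (ENNReal.ofReal r * ENNReal.ofReal (δ / r ^ 2)) := by
          rw [hmul, ENNReal.mul_inv (.inl hδ0) (.inl ofReal_ne_top),
            ENNReal.mul_inv (.inl hr0) (.inl ofReal_ne_top)]
          calc (ENNReal.ofReal r)⁻¹ * (G δ)⁻¹
              = (ENNReal.ofReal δ)⁻¹ * ENNReal.ofReal δ * ((G δ)⁻¹ * (ENNReal.ofReal r)⁻¹) := by
                rw [ENNReal.inv_mul_cancel hδ0 ofReal_ne_top, one_mul, mul_comm]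
            _ = _ := by ring
      _ ≤ (ENNReal.ofReal δ * G δ)⁻¹ * (ENNReal.ofReal r * m) := by gcongr

lemma lintegral_Ioo_one_div_mul_eq_top {G : ℝ → ℝ≥0∞} (hG : Monotone G) {δ : ℝ} (hδ : 0 < δ)
    (hGδ : G δ ≠ 0) (hdiv : ∫⁻ τ in Ioi δ, 1 / (ENNReal.ofReal τ * G τ) = ∞)
    {q : ℝ → ℝ} {M : ℝ → ℝ≥0∞} (hM : Measurable M)
    (hMint : ∫⁻ r in Ioo 0 1, ENNReal.ofReal r * M r ≠ ∞)
    (hqM : ∀ r ∈ Ioo (0 : ℝ) 1, ∀ τ, M r < ENNReal.ofReal τ → ENNReal.ofReal (q r) ≤ G τ) :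
    ∫⁻ r in Ioo 0 1, 1 / ENNReal.ofReal (r * q r) = ∞ := by
  set C := (ENNReal.ofReal δ * G δ)⁻¹
  have hC : C ≠ ∞ := ENNReal.inv_ne_top.2 (mul_ne_zero (ENNReal.ofReal_pos.2 hδ).ne' hGδ)
  have hle : ∞ ≤ C * (∫⁻ r in Ioo 0 1, ENNReal.ofReal r * M r) +
      ∫⁻ r in Ioo 0 1, 1 / ENNReal.ofReal (r * q r) := calc
    ∞ = ∫⁻ r in Ioo 0 1, (ENNReal.ofReal r * G (δ / r ^ 2))⁻¹ :=
        (lintegral_Ioo_inv_mul_comp_div_sq_eq_top hδ hdiv).symm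
    _ ≤ ∫⁻ r in Ioo 0 1, C * (ENNReal.ofReal r * M r) + 1 / ENNReal.ofReal (r * q r) :=
        setLIntegral_mono' measurableSet_Ioo fun r hr => inv_mul_comp_div_sq_le hG hδ hr (hqM r hr)
    _ = _ := by
        have hmeas : Measurable fun r => C * (ENNReal.ofReal r * M r) := by fun_prop
        rw [lintegral_add_left hmeas, lintegral_const_mul' _ _ hC]
  by_contra h
  exact (ENNReal.add_ne_top.2 ⟨ENNReal.mul_ne_top hC hMint, h⟩) (top_le_iff.1 hle)

lemma ConvexOn.ofReal_map_setAverage_le {α : Type*} [MeasurableSpace α] {μ : Measure α}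
    {t : Set α} (h0 : μ t ≠ 0) (ht : μ t ≠ ∞) {Φ : ℝ → ℝ} (hconv : ConvexOn ℝ (Ici 0) Φ)
    (hmono : MonotoneOn Φ (Ici 0)) (hΦ0 : 0 ≤ Φ 0) {f : α → ℝ} (hf : Measurable f)
    (hf0 : ∀ x, 0 ≤ f x) :
    ENNReal.ofReal (Φ (⨍ x in t, f x ∂μ)) ≤ (μ t)⁻¹ * ∫⁻ x in t, ENNReal.ofReal (Φ (f x)) ∂μ := by
  have hΦf : ∀ x, Φ 0 ≤ Φ (f x) := fun x => hmono self_mem_Ici (hf0 x) (hf0 x)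
  by_cases hfi : IntegrableOn f t μ
  swap
  · -- the average of a non-integrable function is `0`, and `Φ ∘ f ≥ Φ 0`
    rw [setAverage_eq, integral_undef hfi, smul_zero]
    calc ENNReal.ofReal (Φ 0) = (μ t)⁻¹ * ∫⁻ _ in t, ENNReal.ofReal (Φ 0) ∂μ := by
          rw [setLIntegral_const, mul_comm, mul_assoc, ENNReal.mul_inv_cancel h0 ht, mul_one]
      _ ≤ _ := by gcongr with x; exact hΦf x
  by_cases hgi : ∫⁻ x in t, ENNReal.ofReal (Φ (f x)) ∂μ = ∞
  · rw [hgi, ENNReal.mul_top (ENNReal.inv_ne_zero.2 ht)]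
    exact le_top
  have hΦf0 : 0 ≤ᵐ[μ.restrict t] fun x => Φ (f x) := ae_of_all _ fun x => hΦ0.trans (hΦf x)
  have hgi' : IntegrableOn (fun x => Φ (f x)) t μ :=
    ⟨(hmono.measurable_comp_of_nonneg hf hf0).aestronglyMeasurable,
      (hasFiniteIntegral_iff_ofReal hΦf0).2 (lt_top_iff_ne_top.2 hgi)⟩
  have hcont : ContinuousOn Φ (Ici 0) :=
    hconv.continuousOn_Ici (hconv.continuousWithinAt_Ici_of_monotoneOn hmono)
  calc ENNReal.ofReal (Φ (⨍ x in t, f x ∂μ)) ≤ ENNReal.ofReal (⨍ x in t, Φ (f x) ∂μ) :=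
        ENNReal.ofReal_le_ofReal <| hconv.map_set_average_le hcont isClosed_Ici h0 ht
          (ae_of_all _ hf0) hfi hgi'
    _ = _ := by
        rw [setAverage_eq, smul_eq_mul, ENNReal.ofReal_mul (by positivity),
          ofReal_integral_eq_lintegral_ofReal hgi' hΦf0, measureReal_def,
          ENNReal.ofReal_inv_of_pos (ENNReal.toReal_pos h0 ht), ENNReal.ofReal_toReal ht]

lemma Function.Periodic.circleMean_eq_setAverage {f : ℝ → ℝ} (hf : Periodic f (2 * π)) :
    (2 * π)⁻¹ * ∫ θ in (0 : ℝ)..2 * π, f θ = ⨍ θ in Ioo (-π) π, f θ := by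
  have hshift := hf.intervalIntegral_add_eq 0 (-π)
  rw [zero_add, show -π + 2 * π = π by ring] at hshift
  rw [setAverage_eq, measureReal_def, Real.volume_Ioo, show π - -π = 2 * π by ring,
    ENNReal.toReal_ofReal two_pi_pos.le,
    smul_eq_mul, hshift, intervalIntegral.integral_of_le (by linarith [pi_pos]),
    integral_Ioc_eq_integral_Ioo]

lemma lintegral_Ioo_mul_lintegral_circle_le {f : ℂ → ℝ≥0∞} (hf : Measurable f) :
    ∫⁻ r in Ioo 0 1, ENNReal.ofReal r *
        ∫⁻ θ in Ioo (-π) π, f (r * Complex.exp (θ * Complex.I)) ≤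
      ∫⁻ z in ball 0 1, f z := by
  have hpolar : ∀ p : ℝ × ℝ, Complex.polarCoord.symm p = p.1 * Complex.exp (p.2 * Complex.I) := by
    intro p
    rw [Complex.polarCoord_symm_apply, Complex.exp_mul_I, ← Complex.ofReal_cos,
      ← Complex.ofReal_sin]
  have hmeas : Measurable fun p : ℝ × ℝ =>
      ENNReal.ofReal p.1 • (ball 0 1).indicator f (Complex.polarCoord.symm p) := by
    have : Measurable fun p : ℝ × ℝ => Complex.polarCoord.symm p := by
      simp_rw [hpolar]
      fun_prop
    exact measurable_fst.ennreal_ofReal.smul ((hf.indicator measurableSet_ball).comp this)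
  rw [← lintegral_indicator measurableSet_ball, ← Complex.lintegral_comp_polarCoord_symm,
    polarCoord_target, Measure.volume_eq_prod, ← Measure.prod_restrict,
    lintegral_prod _ hmeas.aemeasurable]
  refine (lintegral_mono_set Ioo_subset_Ioi_self).trans' (setLIntegral_mono' measurableSet_Ioo
    fun r hr => ?_)
  rw [← lintegral_const_mul' _ _ ofReal_ne_top]
  refine lintegral_mono fun θ => le_of_eq ?_
  rw [hpolar, smul_eq_mul, indicator_of_mem]
  simp [abs_of_pos hr.1, hr.2]

/-- Let `Q : 𝔹 → [0,∞)` be measurable with `∫_𝔹 Φ(Q(z)) dxdy < ∞`, where `Φ` is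
non-decreasing and convex with `∫_δ^∞ dτ/(τ Φ⁻¹(τ)) = ∞` for some `δ > Φ(0)`.
Then `∫_0^1 dr/(r q(r)) = ∞`, where `q(r)` is the mean of `Q` over `|z| = r`. -/
theorem circular_means_integral_infinite
    (Q : ℂ → ℝ) (hQmeas : Measurable Q) (hQpos : ∀ z, 0 ≤ Q z)
    (Φ : ℝ → ℝ) (hΦconv : ConvexOn ℝ (Set.Ici 0) Φ)
    (hΦmono : MonotoneOn Φ (Set.Ici 0)) (hΦpos : ∀ t ≥ 0, 0 ≤ Φ t)
    (hint : ∫⁻ z in ball (0 : ℂ) 1, ENNReal.ofReal (Φ (Q z)) < ∞)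
    (hdiv : ∃ δ : ℝ, Φ 0 < δ ∧
      ∫⁻ τ in Set.Ioi δ, 1 / (ENNReal.ofReal τ * genInvR Φ τ) = ∞) :
    ∫⁻ r in Set.Ioo (0 : ℝ) 1,
      1 / ENNReal.ofReal
        (r * ((2 * Real.pi)⁻¹ *
          ∫ θ in (0 : ℝ)..(2 * Real.pi), Q (r * Complex.exp (θ * Complex.I)))) = ∞ := by
  obtain ⟨δ, hδ, hdiv⟩ := hdiv
  set q : ℝ → ℝ := fun r =>
    (2 * π)⁻¹ * ∫ θ in (0 : ℝ)..2 * π, Q (r * Complex.exp (θ * Complex.I))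
  show ∫⁻ r in Ioo 0 1, 1 / ENNReal.ofReal (r * q r) = ∞
  have hΦ0 : 0 ≤ Φ 0 := hΦpos 0 le_rfl
  have hcircle : Measurable fun p : ℝ × ℝ => p.1 * Complex.exp (p.2 * Complex.I) := by fun_prop
  have hΦQ : Measurable fun z => ENNReal.ofReal (Φ (Q z)) :=
    (hΦmono.measurable_comp_of_nonneg hQmeas hQpos).ennreal_ofReal
  set M : ℝ → ℝ≥0∞ := fun r => (volume (Ioo (-π) π))⁻¹ *
    ∫⁻ θ in Ioo (-π) π, ENNReal.ofReal (Φ (Q (r * Complex.exp (θ * Complex.I))))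
  have hvol0 : volume (Ioo (-π) π) ≠ 0 := by simp [pi_pos]
  have hM : Measurable M := measurable_const.mul (hΦQ.comp hcircle).lintegral_prod_right'
  have hMint : ∫⁻ r in Ioo 0 1, ENNReal.ofReal r * M r ≠ ∞ := by
    simp_rw [M, mul_left_comm (ENNReal.ofReal _)]
    rw [lintegral_const_mul' _ _ (ENNReal.inv_ne_top.2 hvol0)]
    exact ENNReal.mul_ne_top (ENNReal.inv_ne_top.2 hvol0)
      ((lintegral_Ioo_mul_lintegral_circle_le hΦQ).trans_lt hint).ne
  refine lintegral_Ioo_one_div_mul_eq_top (genInvR_mono Φ) (hΦ0.trans_lt hδ)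
    (genInvR_pos hΦmono (hΦconv.continuousWithinAt_Ici_of_monotoneOn hΦmono) hδ).ne' hdiv hM hMint
    fun r _ τ hτ => ?_
  have hper : Periodic (fun θ : ℝ => Q (r * Complex.exp (θ * Complex.I))) (2 * π) := by
    intro θ
    simp only [Complex.ofReal_add, Complex.ofReal_mul, Complex.ofReal_ofNat,
      Complex.exp_mul_I_periodic _]
  have hq0 : 0 ≤ q r :=
    mul_nonneg (by positivity) (intervalIntegral.integral_nonneg two_pi_pos.le fun _ _ => hQpos _)
  have hjensen : ENNReal.ofReal (Φ (q r)) ≤ M r := by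
    rw [show q r = _ from hper.circleMean_eq_setAverage]
    exact hΦconv.ofReal_map_setAverage_le hvol0 measure_Ioo_lt_top.ne hΦmono hΦ0
      (hQmeas.comp (hcircle.comp measurable_prodMk_left)) fun _ => hQpos _
  exact ofReal_le_genInvR hΦmono hq0
    ((ENNReal.ofReal_lt_ofReal_iff_of_nonneg (hΦpos _ hq0)).1 (hjensen.trans_lt hτ))
end

section
/- Suppose Q: 𝔹 → [0,∞] is measurable and ∫_{𝔹 ∩ U} e^{αQ(z)} dxdy < ∞ for some α > 0 and a neighborhood U of 0. Then ∫_0^{r₀} dr / (r q(r)) = ∞ for sufficiently small r₀ > 0, where q(r) denotes the average of Q over the circle |z| = r. -/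
/-!
Write `q(r)` for the circle mean of `Q` and `L(r) = log r⁻¹`. For each small `r`, either
`α q(r) ≤ 2 L(r)`, and then `1 / (r q(r)) ≥ (α / 2) / (r L(r))`; or, by Jensen's inequality, the
circle mean of `e^{αQ}` is at least `e^{α q(r)} ≥ r⁻²`, and then `r ⨍_{|z|=r} e^{αQ} ≥ 1 / (r L(r))`.
In polar coordinates `∫_0^{r₀} r ⨍_{|z|=r} e^{αQ} dr = (2π)⁻¹ ∫_{|z|<r₀} e^{αQ} < ∞`, whereas
`∫_0^{r₀} dr / (r log r⁻¹) = ∞`, so `∫_0^{r₀} dr / (r q(r))` must diverge.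
-/

open MeasureTheory ENNReal Metric Real Set Filter Topology Asymptotics

theorem not_integrableOn_inv_mul_log_inv {r₀ : ℝ} (hr₀ : 0 < r₀) :
    ¬IntegrableOn (fun r : ℝ => (r * Real.log r⁻¹)⁻¹) (Ioo 0 r₀) := by
  have hderiv : ∀ᶠ r in 𝓝[>] (0 : ℝ),
      HasDerivAt (fun r => Real.log (Real.log r⁻¹)) (-(r * Real.log r⁻¹)⁻¹) r := by
    filter_upwards [Ioo_mem_nhdsGT one_pos] with r hr
    have hlog : 0 < Real.log r⁻¹ := Real.log_pos ((one_lt_inv₀ hr.1).2 hr.2)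
    convert ((hasDerivAt_inv hr.1.ne').log (inv_ne_zero hr.1.ne')).log hlog.ne' using 1
    field_simp
  refine not_integrableOn_of_tendsto_norm_atTop_of_deriv_isBigO_filter (𝓝[>] 0)
    (Ioo_mem_nhdsGT hr₀) (hderiv.mono fun r h => h.differentiableAt) ?_ ?_
  · exact tendsto_norm_atTop_atTop.comp
      (tendsto_log_atTop.comp (tendsto_log_atTop.comp tendsto_inv_nhdsGT_zero))
  · exact (EventuallyEq.isBigO (hderiv.mono fun r h => h.deriv)).trans (isBigO_refl _ _).neg_left

theorem lintegral_inv_mul_log_inv_eq_top {r₀ : ℝ} (hr₀ : 0 < r₀) :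
    ∫⁻ r in Ioo 0 r₀, ENNReal.ofReal (r * Real.log r⁻¹)⁻¹ = ∞ := by
  refine top_le_iff.1 (le_trans (top_le_iff.2 ?_)
    (lintegral_mono_set (Ioo_subset_Ioo_right (min_le_left r₀ 1))))
  have hnonneg : ∀ r ∈ Ioo 0 (min r₀ 1), 0 ≤ (r * Real.log r⁻¹)⁻¹ := fun r hr =>
    inv_nonneg.2 (mul_nonneg hr.1.le
      (Real.log_nonneg ((one_le_inv₀ hr.1).2 (hr.2.le.trans (min_le_right _ _)))))
  by_contra h
  exact not_integrableOn_inv_mul_log_inv (lt_min hr₀ one_pos)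
    ((lintegral_ofReal_ne_top_iff_integrable (by fun_prop)
      (ae_restrict_of_forall_mem measurableSet_Ioo hnonneg)).1 h)

theorem lintegral_eq_top_of_le_mul_add {X : Type*} [MeasurableSpace X] {μ : Measure X}
    {f g h : X → ℝ≥0∞} {c : ℝ≥0∞} (hf : ∫⁻ x, f x ∂μ = ∞) (hfg : ∀ᵐ x ∂μ, f x ≤ c * g x + h x)
    (hh : AEMeasurable h μ) (hh_fin : ∫⁻ x, h x ∂μ ≠ ∞) (hc : c ≠ ∞) : ∫⁻ x, g x ∂μ = ∞ := by
  by_contra hg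
  have hle : ∫⁻ x, f x ∂μ ≤ c * ∫⁻ x, g x ∂μ + ∫⁻ x, h x ∂μ := by
    rw [← lintegral_const_mul' c g hc, ← lintegral_add_right' _ hh]
    exact lintegral_mono_ae hfg
  exact add_ne_top.2 ⟨mul_ne_top hc hg, hh_fin⟩ (top_le_iff.1 (hf ▸ hle))

theorem measurable_lintegral_circleMap {g : ℂ → ℝ≥0∞} (hg : Measurable g) (c : ℂ) (s : Set ℝ) :
    Measurable fun r => ∫⁻ θ in s, g (circleMap c r θ) :=
  (hg.comp circleMap.continuous.measurable).lintegral_prod_right'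

theorem polarCoord_symm_eq_circleMap (p : ℝ × ℝ) :
    Complex.polarCoord.symm p = circleMap 0 p.1 p.2 := by
  simp [circleMap, Complex.exp_mul_I, ← Complex.ofReal_cos, ← Complex.ofReal_sin]

theorem setLIntegral_ball_zero_eq {g : ℂ → ℝ≥0∞} (hg : Measurable g) (R : ℝ) :
    ∫⁻ z in ball 0 R, g z =
      ∫⁻ r in Ioo 0 R, ENNReal.ofReal r * ∫⁻ θ in Ioo (-π) π, g (circleMap 0 r θ) := by
  have hmeas : Measurable fun p : ℝ × ℝ =>
      ENNReal.ofReal p.1 • (ball 0 R).indicator g (circleMap 0 p.1 p.2) := by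
    fun_prop (disch := exact measurableSet_ball)
  rw [← lintegral_indicator measurableSet_ball, ← Complex.lintegral_comp_polarCoord_symm,
    polarCoord_target, Measure.volume_eq_prod, ← Measure.prod_restrict]
  simp_rw [polarCoord_symm_eq_circleMap]
  rw [lintegral_prod _ hmeas.aemeasurable, ← Ioi_inter_Iio (a := (0 : ℝ)), inter_comm,
    ← Measure.restrict_restrict measurableSet_Iio, ← lintegral_indicator measurableSet_Iio]
  refine setLIntegral_congr_fun measurableSet_Ioi fun r (hr : 0 < r) => ?_
  have hmem : ∀ θ, circleMap 0 r θ ∈ ball 0 R ↔ r < R := fun θ => by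
    rw [mem_ball, dist_zero_right, norm_circleMap_zero, abs_of_pos hr]
  by_cases hrR : r < R
  · simp only [indicator_of_mem (mem_Iio.2 hrR), indicator_of_mem ((hmem _).2 hrR), smul_eq_mul]
    exact lintegral_const_mul' _ _ ofReal_ne_top
  · simp [indicator_of_notMem (mt mem_Iio.1 hrR), indicator_of_notMem (mt (hmem _).1 hrR)]

theorem setLIntegral_ball_zero_eq_two_pi_mul {g : ℂ → ℝ≥0∞} (hg : Measurable g) (R : ℝ) :
    ∫⁻ z in ball 0 R, g z = ENNReal.ofReal (2 * π) *
      ∫⁻ r in Ioo 0 R, ENNReal.ofReal r * ⨍⁻ θ in Ioo (-π) π, g (circleMap 0 r θ) ∂volume := by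
  have h2π : ENNReal.ofReal (2 * π) ≠ 0 := (ofReal_pos.2 two_pi_pos).ne'
  simp_rw [setLAverage_eq, Real.volume_Ioo, sub_neg_eq_add, ← two_mul, div_eq_mul_inv,
    mul_comm _ (ENNReal.ofReal (2 * π))⁻¹, mul_left_comm (ENNReal.ofReal _)]
  rw [lintegral_const_mul' _ _ (inv_ne_top.2 h2π), ← mul_assoc,
    ENNReal.mul_inv_cancel h2π ofReal_ne_top, one_mul, setLIntegral_ball_zero_eq hg]

theorem ofReal_exp_average_le_laverage {X : Type*} [MeasurableSpace X] {μ : Measure X}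
    [IsFiniteMeasure μ] [NeZero μ] {f : X → ℝ} (hf : AEMeasurable f μ) (hf0 : 0 ≤ᵐ[μ] f) :
    ENNReal.ofReal (Real.exp (⨍ x, f x ∂μ)) ≤ ⨍⁻ x, ENNReal.ofReal (Real.exp (f x)) ∂μ := by
  rw [laverage_eq]
  by_cases hfin : ∫⁻ x, ENNReal.ofReal (Real.exp (f x)) ∂μ = ∞
  · rw [hfin, top_div_of_ne_top (measure_ne_top μ univ)]
    exact le_top
  have hexp_nonneg : 0 ≤ᵐ[μ] fun x => Real.exp (f x) := ae_of_all _ fun x => (exp_pos _).le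
  have hexp : Integrable (fun x => Real.exp (f x)) μ :=
    (lintegral_ofReal_ne_top_iff_integrable (by fun_prop) hexp_nonneg).1 hfin
  have hfi : Integrable f μ := hexp.mono' hf.aestronglyMeasurable <| hf0.mono fun x hx => by
    rw [Real.norm_of_nonneg hx]
    linarith [add_one_le_exp (f x)]
  rw [← ofReal_average hexp hexp_nonneg]
  exact ofReal_le_ofReal (convexOn_exp.map_average_le continuousOn_exp isClosed_univ
    (ae_of_all _ fun x => mem_univ (f x)) hfi hexp)

theorem circleAverage_eq_setAverage_Ioo (f : ℂ → ℝ) (c : ℂ) (R : ℝ) :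
    circleAverage f c R = ⨍ θ in Ioo (-π) π, f (circleMap c R θ) := by
  rw [circleAverage_eq_integral_add (-π),
    intervalIntegral.integral_comp_add_right (fun θ => f (circleMap c R θ)), setAverage_eq,
    Real.volume_real_Ioo_of_le (by linarith [pi_pos]), zero_add, ← sub_eq_add_neg,
    two_mul, add_sub_cancel_right, intervalIntegral.integral_of_le (by linarith [pi_pos]),
    integral_Ioc_eq_integral_Ioo]
  ring_nf

theorem ofReal_exp_circleAverage_le {f : ℂ → ℝ} (hf : Measurable f) (hf0 : ∀ z, 0 ≤ f z)
    (c : ℂ) (R : ℝ) :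
    ENNReal.ofReal (Real.exp (circleAverage f c R)) ≤
      ⨍⁻ θ in Ioo (-π) π, ENNReal.ofReal (Real.exp (f (circleMap c R θ))) ∂volume := by
  have : NeZero ((volume : Measure ℝ).restrict (Ioo (-π) π)) := ⟨by simp [pi_pos]⟩
  rw [circleAverage_eq_setAverage_Ioo]
  exact ofReal_exp_average_le_laverage (hf.comp (measurable_circleMap c R)).aemeasurable
    (ae_of_all _ fun θ => hf0 _)

theorem inv_mul_log_inv_le {α r q : ℝ} (hα : 0 < α) (hr : 0 < r) (hlog : 1 ≤ Real.log r⁻¹)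
    (hq : 0 < q) : (r * Real.log r⁻¹)⁻¹ ≤ 2 / α * (r * q)⁻¹ + r * Real.exp (α * q) := by
  rcases le_or_gt (α * q) (2 * Real.log r⁻¹) with hsmall | hlarge
  · refine le_add_of_le_of_nonneg ?_ (by positivity)
    calc (r * Real.log r⁻¹)⁻¹ ≤ (r * (α * q / 2))⁻¹ :=
          inv_anti₀ (by positivity) (mul_le_mul_of_nonneg_left (by linarith) hr.le)
      _ = 2 / α * (r * q)⁻¹ := by field_simp
  · refine le_add_of_nonneg_of_le (by positivity) ?_
    calc (r * Real.log r⁻¹)⁻¹ ≤ r⁻¹ := inv_anti₀ hr (le_mul_of_one_le_right hr.le hlog)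
      _ = r * Real.exp (2 * Real.log r⁻¹) := by
          rw [two_mul, Real.exp_add, Real.exp_log (inv_pos.2 hr)]
          field_simp
      _ ≤ r * Real.exp (α * q) := by gcongr

theorem ofReal_inv_mul_log_inv_le {α r q : ℝ} (hα : 0 < α) (hr : 0 < r)
    (hlog : 1 ≤ Real.log r⁻¹) (hq : 0 ≤ q) :
    ENNReal.ofReal (r * Real.log r⁻¹)⁻¹ ≤
      ENNReal.ofReal (2 / α) * (1 / ENNReal.ofReal (r * q)) +
        ENNReal.ofReal (r * Real.exp (α * q)) := by
  rcases hq.eq_or_lt with rfl | hq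
  · simp [ENNReal.mul_top (ofReal_pos.2 (div_pos two_pos hα)).ne']
  rw [one_div, ← ofReal_inv_of_pos (by positivity), ← ofReal_mul (by positivity)]
  exact (ofReal_le_ofReal (inv_mul_log_inv_le hα hr hlog hq)).trans ofReal_add_le

theorem ofReal_inv_mul_log_inv_le_circleAverage {Q : ℂ → ℝ} (hQmeas : Measurable Q)
    (hQpos : ∀ z, 0 ≤ Q z) {α : ℝ} (hα : 0 < α) (c : ℂ) {r : ℝ} (hr : 0 < r)
    (hlog : 1 ≤ Real.log r⁻¹) :
    ENNReal.ofReal (r * Real.log r⁻¹)⁻¹ ≤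
      ENNReal.ofReal (2 / α) * (1 / ENNReal.ofReal (r * circleAverage Q c r)) +
        ENNReal.ofReal r *
          ⨍⁻ θ in Ioo (-π) π, ENNReal.ofReal (Real.exp (α * Q (circleMap c r θ))) ∂volume := by
  refine (ofReal_inv_mul_log_inv_le hα hr hlog
    (circleAverage_nonneg_of_nonneg fun z _ => hQpos z)).trans (add_le_add le_rfl ?_)
  rw [ofReal_mul hr.le, ← smul_eq_mul α, ← circleAverage_fun_smul]
  exact mul_le_mul_right (ofReal_exp_circleAverage_le (by fun_prop)
    (fun z => mul_nonneg hα.le (hQpos z)) c r) _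

/-- If `Q : 𝔹 → [0,∞)` is measurable and `e^{αQ}` is integrable on `𝔹 ∩ U` for
some `α > 0` and a neighborhood `U` of `0`, then `∫_0^{r₀} dr/(r q(r)) = ∞` for
all sufficiently small `r₀ > 0`, where `q(r)` is the mean of `Q` over `|z|=r`. -/
theorem circular_means_integral_infinite_of_exp_integrable
    (Q : ℂ → ℝ) (hQmeas : Measurable Q) (hQpos : ∀ z, 0 ≤ Q z)
    (hexp : ∃ α : ℝ, 0 < α ∧ ∃ U : Set ℂ, U ∈ nhds (0 : ℂ) ∧
      ∫⁻ z in ball (0 : ℂ) 1 ∩ U, ENNReal.ofReal (Real.exp (α * Q z)) < ∞) :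
    ∃ r₁ : ℝ, 0 < r₁ ∧ ∀ r₀ : ℝ, 0 < r₀ → r₀ ≤ r₁ →
      ∫⁻ r in Set.Ioo (0 : ℝ) r₀,
        1 / ENNReal.ofReal
          (r * ((2 * Real.pi)⁻¹ *
            ∫ θ in (0 : ℝ)..(2 * Real.pi), Q (r * Complex.exp (θ * Complex.I)))) = ∞ := by
  obtain ⟨α, hα, U, hU, hfin⟩ := hexp
  obtain ⟨ε, hε, hεU⟩ := Metric.mem_nhds_iff.1 hU
  have hg : Measurable fun z => ENNReal.ofReal (Real.exp (α * Q z)) := by fun_prop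
  refine ⟨min ε (Real.exp (-1)), lt_min hε (exp_pos _), fun r₀ hr₀ hr₀le => ?_⟩
  have hr₀exp : r₀ ≤ Real.exp (-1) := hr₀le.trans (min_le_right _ _)
  have hball : ball (0 : ℂ) r₀ ⊆ ball 0 1 ∩ U := fun z hz =>
    ⟨ball_subset_ball (hr₀exp.trans (exp_le_one_iff.2 (by norm_num))) hz,
      hεU (ball_subset_ball (hr₀le.trans (min_le_left _ _)) hz)⟩
  have hbound : ∀ r ∈ Ioo 0 r₀, _ := fun r ⟨hr, hrr₀⟩ => by
    have hlog : 1 ≤ Real.log r⁻¹ := by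
      rw [Real.log_inv, le_neg, ← Real.log_exp (-1)]
      exact Real.log_le_log hr (hrr₀.le.trans hr₀exp)
    have hmean : (2 * π)⁻¹ * ∫ θ in (0 : ℝ)..(2 * π), Q (r * Complex.exp (θ * Complex.I)) =
        circleAverage Q 0 r := by
      simp [circleAverage, circleMap]
    exact hmean ▸ ofReal_inv_mul_log_inv_le_circleAverage hQmeas hQpos hα 0 hr hlog
  refine lintegral_eq_top_of_le_mul_add (lintegral_inv_mul_log_inv_eq_top hr₀)
    (ae_restrict_of_forall_mem measurableSet_Ioo hbound) ?_ ?_ ofReal_ne_top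
  · simp_rw [setLAverage_eq]
    exact (measurable_ofReal.mul ((measurable_lintegral_circleMap hg 0 _).div_const _)).aemeasurable
  · refine (lt_top_of_mul_ne_top_right ?_ (ofReal_pos.2 two_pi_pos).ne').ne
    rw [← setLIntegral_ball_zero_eq_two_pi_mul hg]
    exact ((lintegral_mono_set hball).trans_lt hfin).ne
end
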